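/- arXiv:2605.06962 — 2 statements merged into one kernel-verified Lean document; each statement's English description precedes it below -/
import Mathlib

section
/- For a deck-shuffler IET T_l, the map H_l(x) = Σ_{n≥0} χ_B(T_l^n x)/2^{n+1} is monotone increasing: x < y implies H_l(x) ≤ H_l(y). -/
/-- The `i`-th interval `A_i` of a deck-shuffler IET, determined by the lengths `lA`. -/
def petalA (m : ℕ) (lA : Fin m → ℝ) (i : Fin m) : Set ℝ :=
  Set.Ico (∑ j ∈ Finset.Iio i, lA j) ((∑ j ∈ Finset.Iio i, lA j) + lA i)

/-- The `i`-th interval `B_i` of a deck-shuffler IET. -/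
def petalB (m : ℕ) (lA lB : Fin m → ℝ) (i : Fin m) : Set ℝ :=
  Set.Ico ((∑ j, lA j) + ∑ j ∈ Finset.Iio i, lB j)
    (((∑ j, lA j) + ∑ j ∈ Finset.Iio i, lB j) + lB i)

/-- `A = A_1 ∪ … ∪ A_m`. -/
def setA (m : ℕ) (lA : Fin m → ℝ) : Set ℝ := ⋃ i, petalA m lA i

/-- `B = B_1 ∪ … ∪ B_m`. -/
def setB (m : ℕ) (lA lB : Fin m → ℝ) : Set ℝ := ⋃ i, petalB m lA lB i

/-- `T` is the `2m`-interval deck-shuffler IET with length data `lA, lB`: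
the intervals `A_1 < … < A_m < B_1 < … < B_m` have positive lengths summing to `1`,
and `T x = x + |B_1| + … + |B_i|` on `A_i`, `T x = x − |A_i| − … − |A_m|` on `B_i`
(so the image order is `T(B_1) < T(A_1) < … < T(B_m) < T(A_m)`). -/
def IsDeckShuffler (m : ℕ) (lA lB : Fin m → ℝ) (T : ℝ → ℝ) : Prop :=
  0 < m ∧ (∀ i, 0 < lA i) ∧ (∀ i, 0 < lB i) ∧
  ((∑ i, lA i) + (∑ i, lB i) = 1) ∧
  (∀ i, ∀ x ∈ petalA m lA i, T x = x + ∑ j ∈ Finset.Iic i, lB j) ∧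
  (∀ i, ∀ x ∈ petalB m lA lB i, T x = x - ∑ j ∈ Finset.Ici i, lA j)

/-- `H_l(x) = Σ_{n≥0} χ_B(T^n x) / 2^(n+1)`. -/
noncomputable def Hmap (m : ℕ) (lA lB : Fin m → ℝ) (T : ℝ → ℝ) (x : ℝ) : ℝ :=
  ∑' n : ℕ, (setB m lA lB).indicator (fun _ => (1 : ℝ)) (T^[n] x) / 2 ^ (n + 1)

section DSaux

theorem DS.find_petal (m : ℕ) (l : Fin m → ℝ) (hl : ∀ i, 0 < l i) {z : ℝ} (h0 : 0 ≤ z)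
    (h1 : z < ∑ i, l i) :
    ∃ i, (∑ j ∈ Finset.Iio i, l j) ≤ z ∧ z < (∑ j ∈ Finset.Iio i, l j) + l i := by
  have hm : 0 < m := by
    rcases Nat.eq_zero_or_pos m with h | h
    · subst h; simp at h1; linarith
    · exact h
  set S : Finset (Fin m) := Finset.univ.filter (fun i => ∑ j ∈ Finset.Iio i, l j ≤ z) with hS
  have hne : S.Nonempty := by
    refine ⟨⟨0, hm⟩, ?_⟩
    simp only [hS, Finset.mem_filter, Finset.mem_univ, true_and]
    have : Finset.Iio (⟨0, hm⟩ : Fin m) = ∅ := by ext k; simp [Fin.lt_def]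
    rw [this]; simpa using h0
  set i := S.max' hne with hi
  have hmem : ∑ j ∈ Finset.Iio i, l j ≤ z := by
    have := S.max'_mem hne
    simpa [hS] using this
  refine ⟨i, hmem, ?_⟩
  by_contra hcon
  push_neg at hcon
  have hIic : ∑ j ∈ Finset.Iic i, l j ≤ z := by
    rw [← Finset.Iio_insert, Finset.sum_insert (by simp)]; linarith
  rcases Nat.lt_or_ge (i.val + 1) m with h | h
  · set j : Fin m := ⟨i.val + 1, h⟩ with hj
    have hij : i < j := by simp [hj, Fin.lt_def]
    have hIio : Finset.Iio j = Finset.Iic i := by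
      ext k
      simp only [Finset.mem_Iio, Finset.mem_Iic, Fin.lt_def, Fin.le_def, hj]
      omega
    have : j ∈ S := by
      simp only [hS, Finset.mem_filter, Finset.mem_univ, true_and]; rw [hIio]; exact hIic
    exact absurd (Finset.le_max' S j this) (not_le.2 hij)
  · have : Finset.Iic i = Finset.univ := by
      ext k; simp only [Finset.mem_Iic, Finset.mem_univ, iff_true, Fin.le_def]
      omega
    rw [this] at hIic; linarith

theorem DS.sum_Iic (m : ℕ) (l : Fin m → ℝ) (i : Fin m) :
    ∑ j ∈ Finset.Iic i, l j = ∑ j ∈ Finset.Iio i, l j + l i := by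
  rw [← Finset.Iio_insert, Finset.sum_insert (by simp)]; ring

theorem DS.sum_split (m : ℕ) (l : Fin m → ℝ) (i : Fin m) :
    ∑ j ∈ Finset.Iio i, l j + ∑ j ∈ Finset.Ici i, l j = ∑ j, l j := by
  rw [← Finset.sum_union (by simp [Finset.disjoint_left])]
  congr 1; ext k; simp [lt_or_ge]

theorem DS.mem_setB_iff {m : ℕ} {lA lB : Fin m → ℝ} (hA : ∀ i, 0 < lA i) (hB : ∀ i, 0 < lB i)
    (hsum : (∑ i, lA i) + (∑ i, lB i) = 1) {z : ℝ} (hz : z ∈ Set.Ico (0:ℝ) 1) :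
    z ∈ setB m lA lB ↔ (∑ i, lA i) ≤ z := by
  constructor
  · rintro ⟨_, ⟨i, rfl⟩, hzi⟩
    simp only [petalB, Set.mem_Ico] at hzi
    have : (0:ℝ) ≤ ∑ j ∈ Finset.Iio i, lB j :=
      Finset.sum_nonneg fun j _ => (hB j).le
    linarith [hzi.1]
  · intro hle
    obtain ⟨i, h1, h2⟩ := DS.find_petal m lB hB (z := z - ∑ i, lA i) (by linarith)
      (by have := hz.2; linarith)
    exact ⟨_, ⟨i, rfl⟩, by simp only [petalB, Set.mem_Ico]; constructor <;> linarith⟩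

theorem DS.mem_petalA {m : ℕ} {lA : Fin m → ℝ} (hA : ∀ i, 0 < lA i) {z : ℝ}
    (h0 : 0 ≤ z) (h1 : z < ∑ i, lA i) : ∃ i, z ∈ petalA m lA i := by
  obtain ⟨i, ha, hb⟩ := DS.find_petal m lA hA h0 h1
  exact ⟨i, ha, hb⟩

theorem DS.step {m : ℕ} {lA lB : Fin m → ℝ} {T : ℝ → ℝ} (hT : IsDeckShuffler m lA lB T)
    {x y : ℝ} (hx : x ∈ Set.Ico (0:ℝ) 1) (hy : y ∈ Set.Ico (0:ℝ) 1) (hxy : x < y)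
    (hsym : (x ∈ setB m lA lB ↔ y ∈ setB m lA lB)) :
    T x < T y ∧ T x ∈ Set.Ico (0:ℝ) 1 ∧ T y ∈ Set.Ico (0:ℝ) 1 := by
  obtain ⟨hm, hA, hB, hsum, hTA, hTB⟩ := hT
  by_cases hxB : x ∈ setB m lA lB
  · -- both in B
    have hyB : y ∈ setB m lA lB := hsym.1 hxB
    obtain ⟨_, ⟨i, rfl⟩, hxi⟩ := hxB
    obtain ⟨_, ⟨j, rfl⟩, hyj⟩ := hyB
    simp only [petalB, Set.mem_Ico] at hxi hyj
    have hij : i ≤ j := by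
      by_contra hcon
      push_neg at hcon
      have h1 : ∑ k ∈ Finset.Iic j, lB k ≤ ∑ k ∈ Finset.Iio i, lB k :=
        Finset.sum_le_sum_of_subset_of_nonneg
          (fun k hk => by simp at hk ⊢; exact lt_of_le_of_lt hk hcon)
          (fun k _ _ => (hB k).le)
      rw [DS.sum_Iic] at h1
      linarith [hxi.1, hyj.2]
    have hTx := hTB i x ⟨hxi.1, hxi.2⟩
    have hTy := hTB j y ⟨hyj.1, hyj.2⟩
    have hmono : ∑ k ∈ Finset.Ici j, lA k ≤ ∑ k ∈ Finset.Ici i, lA k :=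
      Finset.sum_le_sum_of_subset_of_nonneg
        (fun k hk => by simp at hk ⊢; exact le_trans hij hk)
        (fun k _ _ => (hA k).le)
    have hxi' : 0 ≤ T x := by
      rw [hTx]
      have := DS.sum_split m lA i
      have hposB : (0:ℝ) ≤ ∑ k ∈ Finset.Iio i, lB k :=
        Finset.sum_nonneg fun k _ => (hB k).le
      have hposA : (0:ℝ) ≤ ∑ k ∈ Finset.Iio i, lA k :=
        Finset.sum_nonneg fun k _ => (hA k).le
      linarith [hxi.1]
    have hyj' : 0 ≤ T y := by
      rw [hTy]
      have := DS.sum_split m lA j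
      have hposB : (0:ℝ) ≤ ∑ k ∈ Finset.Iio j, lB k :=
        Finset.sum_nonneg fun k _ => (hB k).le
      have hposA : (0:ℝ) ≤ ∑ k ∈ Finset.Iio j, lA k :=
        Finset.sum_nonneg fun k _ => (hA k).le
      linarith [hyj.1]
    have hxlt : T x < 1 := by
      rw [hTx]
      have : lA i ≤ ∑ k ∈ Finset.Ici i, lA k :=
        Finset.single_le_sum (fun k _ => (hA k).le) (by simp)
      linarith [hx.2, hA i]
    have hylt : T y < 1 := by
      rw [hTy]
      have : lA j ≤ ∑ k ∈ Finset.Ici j, lA k :=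
        Finset.single_le_sum (fun k _ => (hA k).le) (by simp)
      linarith [hy.2, hA j]
    refine ⟨?_, ⟨hxi', hxlt⟩, ⟨hyj', hylt⟩⟩
    rw [hTx, hTy]; linarith
  · -- both in A
    have hyB : y ∉ setB m lA lB := fun h => hxB (hsym.2 h)
    rw [DS.mem_setB_iff hA hB hsum hx, not_le] at hxB
    rw [DS.mem_setB_iff hA hB hsum hy, not_le] at hyB
    obtain ⟨i, hxi⟩ := DS.mem_petalA hA hx.1 hxB
    obtain ⟨j, hyj⟩ := DS.mem_petalA hA (le_trans hx.1 hxy.le) hyB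
    have hxi' := hxi; have hyj' := hyj
    simp only [petalA, Set.mem_Ico] at hxi' hyj'
    have hij : i ≤ j := by
      by_contra hcon
      push_neg at hcon
      have h1 : ∑ k ∈ Finset.Iic j, lA k ≤ ∑ k ∈ Finset.Iio i, lA k :=
        Finset.sum_le_sum_of_subset_of_nonneg
          (fun k hk => by simp at hk ⊢; exact lt_of_le_of_lt hk hcon)
          (fun k _ _ => (hA k).le)
      rw [DS.sum_Iic] at h1
      linarith [hxi'.1, hyj'.2]
    have hTx := hTA i x hxi
    have hTy := hTA j y hyj
    have hmono : ∑ k ∈ Finset.Iic i, lB k ≤ ∑ k ∈ Finset.Iic j, lB k :=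
      Finset.sum_le_sum_of_subset_of_nonneg
        (fun k hk => by simp at hk ⊢; exact le_trans hk hij)
        (fun k _ _ => (hB k).le)
    have key : ∀ (a : ℝ) (p : Fin m), a ∈ petalA m lA p →
        0 ≤ a + ∑ k ∈ Finset.Iic p, lB k ∧ a + ∑ k ∈ Finset.Iic p, lB k < 1 := by
      intro a p hap
      simp only [petalA, Set.mem_Ico] at hap
      have hposB : (0:ℝ) ≤ ∑ k ∈ Finset.Iic p, lB k :=
        Finset.sum_nonneg fun k _ => (hB k).le
      have hposA : (0:ℝ) ≤ ∑ k ∈ Finset.Iio p, lA k :=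
        Finset.sum_nonneg fun k _ => (hA k).le
      constructor
      · linarith [hap.1]
      · have hA' := DS.sum_Iic m lA p
        have h3 : ∑ k ∈ Finset.Iic p, lA k ≤ ∑ k, lA k :=
          Finset.sum_le_sum_of_subset_of_nonneg (Finset.subset_univ _)
            (fun k _ _ => (hA k).le)
        have h4 : ∑ k ∈ Finset.Iic p, lB k ≤ ∑ k, lB k :=
          Finset.sum_le_sum_of_subset_of_nonneg (Finset.subset_univ _)
            (fun k _ _ => (hB k).le)
        linarith [hap.2]
    obtain ⟨hx0, hx1⟩ := key x i hxi
    obtain ⟨hy0, hy1⟩ := key y j hyj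
    rw [hTx, hTy]
    exact ⟨by linarith, ⟨hx0, hx1⟩, ⟨hy0, hy1⟩⟩

theorem DS.orbit {m : ℕ} {lA lB : Fin m → ℝ} {T : ℝ → ℝ} (hT : IsDeckShuffler m lA lB T)
    {x y : ℝ} (hx : x ∈ Set.Ico (0:ℝ) 1) (hy : y ∈ Set.Ico (0:ℝ) 1) (hxy : x < y)
    (n : ℕ) (hsym : ∀ k < n, (T^[k] x ∈ setB m lA lB ↔ T^[k] y ∈ setB m lA lB)) :
    T^[n] x ∈ Set.Ico (0:ℝ) 1 ∧ T^[n] y ∈ Set.Ico (0:ℝ) 1 ∧ T^[n] x < T^[n] y := by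
  induction n with
  | zero => exact ⟨hx, hy, hxy⟩
  | succ n ih =>
    obtain ⟨hxn, hyn, hlt⟩ := ih (fun k hk => hsym k (Nat.lt_succ_of_lt hk))
    have := DS.step hT hxn hyn hlt (hsym n (Nat.lt_succ_self n))
    rw [Function.iterate_succ_apply', Function.iterate_succ_apply']
    exact ⟨this.2.1, this.2.2, this.1⟩

theorem DS.ind_mem {m : ℕ} (lA lB : Fin m → ℝ) {z : ℝ} (h : z ∈ setB m lA lB) :
    (setB m lA lB).indicator (fun _ => (1:ℝ)) z = 1 := Set.indicator_of_mem h _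

theorem DS.ind_bounds {m : ℕ} (lA lB : Fin m → ℝ) (z : ℝ) :
    0 ≤ (setB m lA lB).indicator (fun _ => (1:ℝ)) z ∧
    (setB m lA lB).indicator (fun _ => (1:ℝ)) z ≤ 1 := by
  by_cases h : z ∈ setB m lA lB <;>
    simp [Set.indicator_of_mem, Set.indicator_of_notMem, h]

theorem DS.summable {m : ℕ} (lA lB : Fin m → ℝ) (T : ℝ → ℝ) (x : ℝ) :
    Summable (fun n : ℕ =>
      (setB m lA lB).indicator (fun _ => (1:ℝ)) (T^[n] x) / 2 ^ (n + 1)) := by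
  apply Summable.of_nonneg_of_le
    (fun n => div_nonneg (DS.ind_bounds lA lB (T^[n] x)).1 (by positivity))
    (fun n => ?_) (summable_geometric_two.mul_right (1/2))
  have h1 := (DS.ind_bounds lA lB (T^[n] x)).2
  rw [div_le_iff₀ (by positivity)]
  have h2 : ((1:ℝ)/2)^n * (1/2) * 2^(n+1) = 1 := by
    rw [← pow_succ, div_pow, one_pow, one_div, inv_mul_cancel₀ (by positivity)]
  linarith

end DSaux

theorem stmt12 (m : ℕ) (lA lB : Fin m → ℝ) (T : ℝ → ℝ)
    (hT : IsDeckShuffler m lA lB T) :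
    ∀ x ∈ Set.Ico (0 : ℝ) 1, ∀ y ∈ Set.Ico (0 : ℝ) 1,
      x < y → Hmap m lA lB T x ≤ Hmap m lA lB T y := by
  classical
  intro x hx y hy hxy
  have hA := hT.2.1
  have hB := hT.2.2.1
  have hsum := hT.2.2.2.1
  set f : ℝ → ℝ := (setB m lA lB).indicator (fun _ => (1:ℝ)) with hf
  set u : ℕ → ℝ := fun n => f (T^[n] x) / 2 ^ (n+1) with hu
  set v : ℕ → ℝ := fun n => f (T^[n] y) / 2 ^ (n+1) with hv
  have hsu : Summable u := DS.summable lA lB T x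
  have hsv : Summable v := DS.summable lA lB T y
  have hHx : Hmap m lA lB T x = ∑' n, u n := rfl
  have hHy : Hmap m lA lB T y = ∑' n, v n := rfl
  have heqterm : ∀ n, (T^[n] x ∈ setB m lA lB ↔ T^[n] y ∈ setB m lA lB) → u n = v n := by
    intro n hiff
    have : f (T^[n] x) = f (T^[n] y) := by
      by_cases h : T^[n] x ∈ setB m lA lB
      · rw [hf, Set.indicator_of_mem h, Set.indicator_of_mem (hiff.1 h)]
      · rw [hf, Set.indicator_of_notMem h,
          Set.indicator_of_notMem (fun h' => h (hiff.2 h'))]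
    simp only [hu, hv, this]
  by_cases hall : ∀ n, (T^[n] x ∈ setB m lA lB ↔ T^[n] y ∈ setB m lA lB)
  · rw [hHx, hHy]
    exact le_of_eq (tsum_congr fun n => heqterm n (hall n))
  · have hex : ∃ n, ¬(T^[n] x ∈ setB m lA lB ↔ T^[n] y ∈ setB m lA lB) := not_forall.1 hall
    set N := Nat.find hex with hNdef
    have hN : ¬(T^[N] x ∈ setB m lA lB ↔ T^[N] y ∈ setB m lA lB) := Nat.find_spec hex
    have hbefore : ∀ k < N, (T^[k] x ∈ setB m lA lB ↔ T^[k] y ∈ setB m lA lB) :=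
      fun k hk => of_not_not (Nat.find_min hex hk)
    obtain ⟨hxN, hyN, hltN⟩ := DS.orbit hT hx hy hxy N hbefore
    have hxB : T^[N] x ∉ setB m lA lB := by
      intro h
      have h1 : (∑ i, lA i) ≤ T^[N] x := (DS.mem_setB_iff hA hB hsum hxN).1 h
      have h2 : T^[N] y ∈ setB m lA lB :=
        (DS.mem_setB_iff hA hB hsum hyN).2 (le_trans h1 hltN.le)
      exact hN ⟨fun _ => h2, fun _ => h⟩
    have hyB : T^[N] y ∈ setB m lA lB := by
      by_contra h'
      exact hN ⟨fun h => absurd h hxB, fun h => absurd h h'⟩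
    have huN : u N = 0 := by
      simp [hu, hf, Set.indicator_of_notMem hxB]
    have hvN : v N = (1:ℝ)/2^(N+1) := by
      simp [hv, hf, Set.indicator_of_mem hyB]
    -- splits
    have hxsplit := Summable.sum_add_tsum_nat_add (f := u) (N+1) hsu
    have hysplit := Summable.sum_add_tsum_nat_add (f := v) (N+1) hsv
    have hhead : ∑ k ∈ Finset.range N, u k = ∑ k ∈ Finset.range N, v k :=
      Finset.sum_congr rfl fun k hk => heqterm k (hbefore k (Finset.mem_range.1 hk))
    -- tail bounds
    have hpow : ∀ i : ℕ, (1:ℝ)/2^(i+(N+1)+1) = (1/2)^i * (1/2)^(N+2) := by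
      intro i
      rw [div_pow, div_pow, one_pow, one_pow, div_mul_div_comm, one_mul, ← pow_add,
        show i+(N+2) = i+(N+1)+1 from by omega]
    have hgeo : Summable (fun i : ℕ => (1:ℝ)/2^(i+(N+1)+1)) := by
      have h1 : Summable (fun i : ℕ => ((1:ℝ)/2)^i * (1/2)^(N+2)) :=
        summable_geometric_two.mul_right _
      exact h1.congr fun i => (hpow i).symm
    have htailu : ∑' i, u (i + (N+1)) ≤ (1:ℝ)/2^(N+1) := by
      have hb : ∀ i, u (i + (N+1)) ≤ (1:ℝ)/2^(i+(N+1)+1) := by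
        intro i
        simp only [hu]
        have h2 : (0:ℝ) < 2^(i+(N+1)+1) := by positivity
        rw [div_le_div_iff_of_pos_right h2]
        exact (DS.ind_bounds lA lB _).2
      have hle := Summable.tsum_le_tsum hb (hsu.comp_injective (add_left_injective (N+1))) hgeo
      refine hle.trans ?_
      rw [tsum_congr hpow, tsum_mul_right, tsum_geometric_two]
      have h3 : (2:ℝ) * ((1/2)^(N+2)) = 1/2^(N+1) := by
        rw [div_pow, one_pow, pow_succ, mul_one_div, mul_comm ((2:ℝ)^(N+1)) 2, ← div_div,
          div_self (by norm_num)]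
      exact le_of_eq h3
    have htailv : (0:ℝ) ≤ ∑' i, v (i + (N+1)) :=
      tsum_nonneg fun i => div_nonneg (DS.ind_bounds lA lB _).1 (by positivity)
    rw [hHx, hHy, ← hxsplit, ← hysplit,
      Finset.sum_range_succ, Finset.sum_range_succ, huN, hvN, hhead]
    linarith
end

section
/- If a deck-shuffler IET T_l is minimal (every orbit is dense in [0,1)), then H_l(x) = Σ_{n≥0} χ_B(T_l^n x)/2^{n+1} is strictly increasing, and hence injective, giving a right-continuous embedding of T_l into the doubling map E_2. -/
/- ### Auxiliary lemmas -/

lemma exists_petal {m : ℕ} (hm : 0 < m) (l : Fin m → ℝ) {t : ℝ}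
    (h0 : 0 ≤ t) (h1 : t < ∑ j, l j) :
    ∃ i, ∑ j ∈ Finset.Iio i, l j ≤ t ∧ t < (∑ j ∈ Finset.Iio i, l j) + l i := by
  classical
  set s : Finset (Fin m) := Finset.univ.filter (fun i => t < ∑ j ∈ Finset.Iic i, l j) with hs
  have hne : s.Nonempty := by
    refine ⟨⟨m-1, by omega⟩, ?_⟩
    simp only [hs, Finset.mem_filter, Finset.mem_univ, true_and]
    have : Finset.Iic (⟨m-1, by omega⟩ : Fin m) = Finset.univ := by
      ext j; simp [Finset.mem_Iic, Fin.le_def]; omega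
    rw [this]; exact h1
  set i := s.min' hne with hi
  have hispec : t < ∑ j ∈ Finset.Iic i, l j := by
    have := s.min'_mem hne
    simp only [hs, Finset.mem_filter] at this; exact this.2
  have hIic : ∑ j ∈ Finset.Iic i, l j = (∑ j ∈ Finset.Iio i, l j) + l i := by
    rw [← Finset.Iio_insert, Finset.sum_insert (by simp)]; ring
  refine ⟨i, ?_, by rw [← hIic]; exact hispec⟩
  rcases (Finset.Iio i).eq_empty_or_nonempty with he | hne'
  · rw [he]; simpa using h0
  · set j := (Finset.Iio i).max' hne' with hj
    have hjlt : j < i := Finset.mem_Iio.mp ((Finset.Iio i).max'_mem hne')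
    have hIio : Finset.Iio i = Finset.Iic j := by
      ext k; simp only [Finset.mem_Iio, Finset.mem_Iic]
      exact ⟨fun hk => (Finset.Iio i).le_max' k (Finset.mem_Iio.mpr hk),
        fun hk => lt_of_le_of_lt hk hjlt⟩
    rw [hIio]
    by_contra hc
    push_neg at hc
    have : j ∈ s := by
      simp only [hs, Finset.mem_filter, Finset.mem_univ, true_and]; exact hc
    exact absurd (s.min'_le j this) (not_le.mpr hjlt)

lemma sum_Iio_nonneg {m : ℕ} (l : Fin m → ℝ) (hl : ∀ i, 0 < l i) (i : Fin m) :
    0 ≤ ∑ j ∈ Finset.Iio i, l j :=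
  Finset.sum_nonneg fun j _ => (hl j).le

lemma sum_Iic_le {m : ℕ} (l : Fin m → ℝ) (hl : ∀ i, 0 < l i) (i : Fin m) :
    (∑ j ∈ Finset.Iio i, l j) + l i ≤ ∑ j, l j := by
  rw [add_comm, ← Finset.sum_insert (by simp : i ∉ Finset.Iio i), Finset.Iio_insert]
  exact Finset.sum_le_sum_of_subset_of_nonneg (Finset.subset_univ _)
    (fun j _ _ => (hl j).le)

lemma setA_eq {m : ℕ} (hm : 0 < m) (lA : Fin m → ℝ) (hl : ∀ i, 0 < lA i) :
    setA m lA = Set.Ico 0 (∑ i, lA i) := by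
  ext x
  simp only [setA, Set.mem_iUnion, petalA, Set.mem_Ico]
  constructor
  · rintro ⟨i, h1, h2⟩
    exact ⟨le_trans (sum_Iio_nonneg lA hl i) h1, lt_of_lt_of_le h2 (sum_Iic_le lA hl i)⟩
  · rintro ⟨h1, h2⟩
    exact exists_petal hm lA h1 h2

lemma setB_eq {m : ℕ} (hm : 0 < m) (lA lB : Fin m → ℝ) (hl : ∀ i, 0 < lB i) :
    setB m lA lB = Set.Ico (∑ i, lA i) ((∑ i, lA i) + ∑ i, lB i) := by
  ext x
  simp only [setB, Set.mem_iUnion, petalB, Set.mem_Ico]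
  constructor
  · rintro ⟨i, h1, h2⟩
    refine ⟨le_trans (by linarith [sum_Iio_nonneg lB hl i]) h1, ?_⟩
    have := sum_Iic_le lB hl i
    linarith
  · rintro ⟨h1, h2⟩
    obtain ⟨i, hi1, hi2⟩ := exists_petal hm lB (t := x - ∑ i, lA i)
      (by linarith) (by linarith)
    exact ⟨i, by linarith, by linarith⟩

lemma sum_split_Iio_Ici {m : ℕ} (l : Fin m → ℝ) (i : Fin m) :
    ∑ j, l j = (∑ j ∈ Finset.Iio i, l j) + ∑ j ∈ Finset.Ici i, l j := by
  classical
  rw [← Finset.sum_union]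
  · congr 1
    ext j
    simp only [Finset.mem_union, Finset.mem_Iio, Finset.mem_Ici, Finset.mem_univ, true_iff]
    exact lt_or_ge j i
  · simp only [Finset.disjoint_left, Finset.mem_Iio, Finset.mem_Ici]
    intro j h1 h2; exact absurd h2 (not_le.mpr h1)

lemma sum_Iic_eq {m : ℕ} (l : Fin m → ℝ) (i : Fin m) :
    ∑ j ∈ Finset.Iic i, l j = (∑ j ∈ Finset.Iio i, l j) + l i := by
  rw [← Finset.Iio_insert, Finset.sum_insert (by simp)]; ring

section IET
variable {m : ℕ} {lA lB : Fin m → ℝ} {T : ℝ → ℝ}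
variable (hA : ∀ i, 0 < lA i) (hB : ∀ i, 0 < lB i)
  (hsum : (∑ i, lA i) + (∑ i, lB i) = 1)
  (hTA : ∀ i, ∀ x ∈ petalA m lA i, T x = x + ∑ j ∈ Finset.Iic i, lB j)
  (hTB : ∀ i, ∀ x ∈ petalB m lA lB i, T x = x - ∑ j ∈ Finset.Ici i, lA j)

include hA hB hsum hTA in
lemma TmemA {x : ℝ} {i : Fin m} (hx : x ∈ petalA m lA i) : T x ∈ Set.Ico (0:ℝ) 1 := by
  obtain ⟨h1, h2⟩ := hx
  rw [hTA i x ⟨h1, h2⟩]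
  have hbnd : ∑ j ∈ Finset.Iic i, lB j ≤ ∑ j, lB j :=
    Finset.sum_le_sum_of_subset_of_nonneg (Finset.subset_univ _) (fun j _ _ => (hB j).le)
  have hAbnd : (∑ j ∈ Finset.Iio i, lA j) + lA i ≤ ∑ j, lA j := sum_Iic_le lA hA i
  have h0 : 0 ≤ ∑ j ∈ Finset.Iio i, lA j := sum_Iio_nonneg lA hA i
  have hB0 : 0 ≤ ∑ j ∈ Finset.Iic i, lB j := Finset.sum_nonneg fun j _ => (hB j).le
  constructor
  · linarith
  · linarith

include hA hB hsum hTB in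
lemma TmemB {x : ℝ} {i : Fin m} (hx : x ∈ petalB m lA lB i) : T x ∈ Set.Ico (0:ℝ) 1 := by
  obtain ⟨h1, h2⟩ := hx
  rw [hTB i x ⟨h1, h2⟩]
  have hsplit := sum_split_Iio_Ici lA i
  have h0 : 0 ≤ ∑ j ∈ Finset.Iio i, lA j := sum_Iio_nonneg lA hA i
  have h0B : 0 ≤ ∑ j ∈ Finset.Iio i, lB j := sum_Iio_nonneg lB hB i
  have hpos : 0 < ∑ j ∈ Finset.Ici i, lA j :=
    Finset.sum_pos (fun j _ => hA j) ⟨i, Finset.mem_Ici.mpr le_rfl⟩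
  have hBbnd : (∑ j ∈ Finset.Iio i, lB j) + lB i ≤ ∑ j, lB j := sum_Iic_le lB hB i
  constructor
  · linarith
  · linarith

include hA hB hTA in
lemma gapA {x y : ℝ} {i k : Fin m} (hx : x ∈ petalA m lA i) (hy : y ∈ petalA m lA k)
    (hxy : x < y) : y - x ≤ T y - T x := by
  obtain ⟨hx1, hx2⟩ := hx
  obtain ⟨hy1, hy2⟩ := hy
  have hik : i ≤ k := by
    by_contra hc
    push_neg at hc
    have hsub : Finset.Iic k ⊆ Finset.Iio i := fun j hj =>
      Finset.mem_Iio.mpr (lt_of_le_of_lt (Finset.mem_Iic.mp hj) hc)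
    have : ∑ j ∈ Finset.Iic k, lA j ≤ ∑ j ∈ Finset.Iio i, lA j :=
      Finset.sum_le_sum_of_subset_of_nonneg hsub (fun j _ _ => (hA j).le)
    rw [sum_Iic_eq] at this
    linarith
  rw [hTA i x ⟨hx1, hx2⟩, hTA k y ⟨hy1, hy2⟩]
  have : ∑ j ∈ Finset.Iic i, lB j ≤ ∑ j ∈ Finset.Iic k, lB j :=
    Finset.sum_le_sum_of_subset_of_nonneg (Finset.Iic_subset_Iic.mpr hik)
      (fun j _ _ => (hB j).le)
  linarith

include hA hB hTB in
lemma gapB {x y : ℝ} {i k : Fin m} (hx : x ∈ petalB m lA lB i) (hy : y ∈ petalB m lA lB k)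
    (hxy : x < y) : y - x ≤ T y - T x := by
  obtain ⟨hx1, hx2⟩ := hx
  obtain ⟨hy1, hy2⟩ := hy
  have hik : i ≤ k := by
    by_contra hc
    push_neg at hc
    have hsub : Finset.Iic k ⊆ Finset.Iio i := fun j hj =>
      Finset.mem_Iio.mpr (lt_of_le_of_lt (Finset.mem_Iic.mp hj) hc)
    have : ∑ j ∈ Finset.Iic k, lB j ≤ ∑ j ∈ Finset.Iio i, lB j :=
      Finset.sum_le_sum_of_subset_of_nonneg hsub (fun j _ _ => (hB j).le)
    rw [sum_Iic_eq] at this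
    linarith
  rw [hTB i x ⟨hx1, hx2⟩, hTB k y ⟨hy1, hy2⟩]
  have : ∑ j ∈ Finset.Ici k, lA j ≤ ∑ j ∈ Finset.Ici i, lA j :=
    Finset.sum_le_sum_of_subset_of_nonneg (Finset.Ici_subset_Ici.mpr hik)
      (fun j _ _ => (hA j).le)
  linarith
end IET

/- ### Series lemmas -/

lemma geo_shift (N : ℕ) : ∑' i : ℕ, ((1:ℝ)/2) ^ (i + N + 1) = (1/2) ^ N := by
  have h1 : ∀ i : ℕ, ((1:ℝ)/2) ^ (i + N + 1) = ((1:ℝ)/2) ^ (N+1) * (1/2) ^ i := by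
    intro i; rw [← pow_add]; congr 1; omega
  rw [tsum_congr h1, tsum_mul_left, tsum_geometric_two, pow_succ]
  ring

lemma geo_shift_summable (N : ℕ) : Summable (fun i : ℕ => ((1:ℝ)/2) ^ (i + N + 1)) := by
  have := summable_geometric_two.mul_left (((1:ℝ)/2) ^ (N+1))
  refine this.congr fun i => ?_
  rw [← pow_add]; congr 1; omega

lemma tail_le {e : ℕ → ℝ} (N : ℕ) (he0 : ∀ i, 0 ≤ e i)
    (hle : ∀ i, e i ≤ (1/2) ^ (i + N + 1)) (i0 : ℕ) (h0 : e i0 = 0) :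
    ∑' i, e i ≤ (1/2) ^ N - (1/2) ^ (i0 + N + 1) := by
  classical
  have hesum : Summable e :=
    Summable.of_nonneg_of_le he0 hle (geo_shift_summable N)
  have hg'sum : Summable (fun i : ℕ => if i = i0 then 0 else ((1:ℝ)/2) ^ (i + N + 1)) := by
    refine Summable.of_nonneg_of_le (fun i => ?_) (fun i => ?_) (geo_shift_summable N)
    · by_cases h : i = i0 <;> simp [h]
    · by_cases h : i = i0 <;> simp [h]
  have hitesum : Summable (fun i : ℕ => if i = i0 then ((1:ℝ)/2) ^ (i0 + N + 1) else 0) :=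
    summable_of_ne_finset_zero (s := {i0}) (fun i hi => by
      simp only [Finset.mem_singleton] at hi; simp [hi])
  have hsplit : (fun i : ℕ => ((1:ℝ)/2) ^ (i + N + 1))
      = fun i => (if i = i0 then 0 else ((1:ℝ)/2) ^ (i + N + 1))
        + (if i = i0 then ((1:ℝ)/2) ^ (i0 + N + 1) else 0) := by
    funext i; by_cases h : i = i0 <;> simp [h]
  have hval : ∑' i : ℕ, (if i = i0 then 0 else ((1:ℝ)/2) ^ (i + N + 1))
      = (1/2) ^ N - (1/2) ^ (i0 + N + 1) := by
    have hadd := Summable.tsum_add hg'sum hitesum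
    rw [← hsplit, geo_shift N, tsum_ite_eq] at hadd
    linarith
  rw [← hval]
  refine Summable.tsum_le_tsum (fun i => ?_) hesum hg'sum
  by_cases h : i = i0
  · subst h; simp [h0]
  · simp only [if_neg h]; exact hle i

lemma summable_digit {d : ℕ → ℝ} (hd0 : ∀ k, 0 ≤ d k) (hd1 : ∀ k, d k ≤ 1) :
    Summable (fun k : ℕ => d k / 2 ^ (k + 1)) := by
  have hgs : Summable (fun k : ℕ => ((1:ℝ)/2) ^ (k+1)) := by
    simpa [pow_succ, mul_comm] using summable_geometric_two.mul_left (1/2 : ℝ)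
  refine Summable.of_nonneg_of_le (fun k => div_nonneg (hd0 k) (by positivity)) (fun k => ?_) hgs
  rw [div_pow, one_pow]
  exact div_le_div_of_nonneg_right (hd1 k) (by positivity)

lemma tsum_digit_lt {d d' : ℕ → ℝ} {n k0 : ℕ} (hn : n < k0)
    (hd0 : ∀ k, 0 ≤ d k) (hd1 : ∀ k, d k ≤ 1) (hd'0 : ∀ k, 0 ≤ d' k) (hd'1 : ∀ k, d' k ≤ 1)
    (heq : ∀ k < n, d k = d' k) (hdn : d n = 0) (hd'n : d' n = 1) (hdk0 : d k0 = 0) :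
    ∑' k, d k / 2 ^ (k + 1) < ∑' k, d' k / 2 ^ (k + 1) := by
  have hsx : Summable (fun k : ℕ => d k / 2 ^ (k + 1)) := summable_digit hd0 hd1
  have hsy : Summable (fun k : ℕ => d' k / 2 ^ (k + 1)) := summable_digit hd'0 hd'1
  have hx := (Summable.sum_add_tsum_nat_add (f := fun k : ℕ => d k / 2 ^ (k + 1)) (n+1) hsx).symm
  have hy := (Summable.sum_add_tsum_nat_add (f := fun k : ℕ => d' k / 2 ^ (k + 1)) (n+1) hsy).symm
  have hfront : ∑ k ∈ Finset.range (n+1), d' k / 2 ^ (k+1)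
      = (∑ k ∈ Finset.range (n+1), d k / 2 ^ (k+1)) + 1 / 2 ^ (n+1) := by
    rw [Finset.sum_range_succ, Finset.sum_range_succ, hdn, hd'n]
    have hrange : ∑ k ∈ Finset.range n, d' k / 2 ^ (k+1)
        = ∑ k ∈ Finset.range n, d k / 2 ^ (k+1) :=
      Finset.sum_congr rfl fun k hk => by rw [heq k (Finset.mem_range.mp hk)]
    rw [hrange]
    ring
  have hty0 : 0 ≤ ∑' i : ℕ, d' (i + (n+1)) / 2 ^ ((i + (n+1)) + 1) :=
    tsum_nonneg fun i => div_nonneg (hd'0 _) (by positivity)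
  have htx_le : ∑' i : ℕ, d (i + (n+1)) / 2 ^ ((i + (n+1)) + 1)
      ≤ (1/2) ^ (n+1) - (1/2) ^ (k0+1) := by
    have h := tail_le (e := fun i => d (i + (n+1)) / 2 ^ ((i + (n+1)) + 1)) (n+1)
      (fun i => div_nonneg (hd0 _) (by positivity))
      (fun i => by
        have hh : ((1:ℝ)/2) ^ (i + (n+1) + 1) = 1 / 2 ^ (i + (n+1) + 1) := by
          rw [div_pow, one_pow]
        rw [hh]
        exact div_le_div_of_nonneg_right (hd1 _) (by positivity))
      (k0 - (n+1))
      (by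
        have hh : k0 - (n+1) + (n+1) = k0 := by omega
        simp only [hh, hdk0, zero_div])
    have hexp : k0 - (n+1) + (n+1) + 1 = k0 + 1 := by omega
    rw [hexp] at h
    exact h
  have hpow : ((1:ℝ)/2) ^ (n+1) = 1 / 2 ^ (n+1) := by rw [div_pow, one_pow]
  have hpowk : (0:ℝ) < (1/2) ^ (k0+1) := by positivity
  rw [hx, hy, hfront]
  linarith

/- ### Main theorem -/

theorem stmt14 (m : ℕ) (lA lB : Fin m → ℝ) (T : ℝ → ℝ)
    (hT : IsDeckShuffler m lA lB T)
    (hmin : ∀ x ∈ Set.Ico (0 : ℝ) 1,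
      Set.Ico (0 : ℝ) 1 ⊆ closure (Set.range fun n : ℕ => T^[n] x)) :
    StrictMonoOn (Hmap m lA lB T) (Set.Ico (0 : ℝ) 1) ∧
    Set.InjOn (Hmap m lA lB T) (Set.Ico (0 : ℝ) 1) := by
  classical
  obtain ⟨hm, hA, hB, hsum, hTA, hTB⟩ := hT
  have hsetA : setA m lA = Set.Ico 0 (∑ i, lA i) := setA_eq hm lA hA
  have hsetB : setB m lA lB = Set.Ico (∑ i, lA i) ((∑ i, lA i) + ∑ i, lB i) :=
    setB_eq hm lA lB hB
  have hne : (Finset.univ : Finset (Fin m)).Nonempty := ⟨⟨0, hm⟩, Finset.mem_univ _⟩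
  have ha0 : 0 < ∑ i, lA i := Finset.sum_pos (fun i _ => hA i) hne
  have hb0 : 0 < ∑ i, lB i := Finset.sum_pos (fun i _ => hB i) hne
  have hdichot : ∀ x ∈ Set.Ico (0:ℝ) 1, x ∈ setA m lA ∨ x ∈ setB m lA lB := by
    intro x hx
    rw [hsetA, hsetB]
    rcases lt_or_ge x (∑ i, lA i) with h | h
    · exact Or.inl ⟨hx.1, h⟩
    · exact Or.inr ⟨h, by rw [hsum]; exact hx.2⟩
  have hdisj : ∀ x : ℝ, x ∈ setA m lA → x ∈ setB m lA lB → False := by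
    intro x h1 h2
    rw [hsetA] at h1; rw [hsetB] at h2
    exact absurd h2.1 (not_le.mpr h1.2)
  have hT01 : ∀ x ∈ Set.Ico (0:ℝ) 1, T x ∈ Set.Ico (0:ℝ) 1 := by
    intro x hx
    rcases hdichot x hx with h | h
    · obtain ⟨i, hi⟩ := Set.mem_iUnion.mp h
      exact TmemA hA hB hsum hTA hi
    · obtain ⟨i, hi⟩ := Set.mem_iUnion.mp h
      exact TmemB hA hB hsum hTB hi
  have hstep : ∀ x y : ℝ, x < y →
      ((x ∈ setA m lA ∧ y ∈ setA m lA) ∨ (x ∈ setB m lA lB ∧ y ∈ setB m lA lB)) →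
      y - x ≤ T y - T x := by
    rintro x y hxy (⟨hx, hy⟩ | ⟨hx, hy⟩)
    · obtain ⟨i, hi⟩ := Set.mem_iUnion.mp hx
      obtain ⟨k, hk⟩ := Set.mem_iUnion.mp hy
      exact gapA hA hB hTA hi hk hxy
    · obtain ⟨i, hi⟩ := Set.mem_iUnion.mp hx
      obtain ⟨k, hk⟩ := Set.mem_iUnion.mp hy
      exact gapB hA hB hTB hi hk hxy
  have hmono : StrictMonoOn (Hmap m lA lB T) (Set.Ico (0:ℝ) 1) := by
    intro x hx y hy hxy
    have horbx : ∀ n : ℕ, T^[n] x ∈ Set.Ico (0:ℝ) 1 := by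
      intro n
      induction n with
      | zero => simpa using hx
      | succ n ih => rw [Function.iterate_succ_apply']; exact hT01 _ ih
    have horby : ∀ n : ℕ, T^[n] y ∈ Set.Ico (0:ℝ) 1 := by
      intro n
      induction n with
      | zero => simpa using hy
      | succ n ih => rw [Function.iterate_succ_apply']; exact hT01 _ ih
    set Same : ℕ → Prop := fun n =>
      (T^[n] x ∈ setA m lA ∧ T^[n] y ∈ setA m lA) ∨
      (T^[n] x ∈ setB m lA lB ∧ T^[n] y ∈ setB m lA lB) with hSame
    have hgap : ∀ n : ℕ, (∀ k < n, Same k) → y - x ≤ T^[n] y - T^[n] x := by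
      intro n
      induction n with
      | zero => intro _; simp
      | succ n ih =>
        intro h
        have h1 := ih (fun k hk => h k (Nat.lt_succ_of_lt hk))
        have h2 : T^[n] x < T^[n] y := by linarith
        rw [Function.iterate_succ_apply', Function.iterate_succ_apply']
        have h3 := hstep _ _ h2 (h n (Nat.lt_succ_self n))
        linarith
    by_cases hall : ∀ n : ℕ, Same n
    · exfalso
      have hbound : ∀ n : ℕ, T^[n] x ≤ 1 - (y - x) := by
        intro n
        have h1 := hgap n (fun k _ => hall k)
        have h2 := (horby n).2
        linarith
      have hcl : closure (Set.range fun n : ℕ => T^[n] x) ⊆ Set.Iic (1 - (y - x)) := by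
        apply closure_minimal
        · rintro _ ⟨n, rfl⟩; exact hbound n
        · exact isClosed_Iic
      have hp : (1 - (y - x)/2) ∈ Set.Ico (0:ℝ) 1 :=
        ⟨by nlinarith [hx.1, hy.2], by linarith⟩
      have := hcl (hmin x hx hp)
      rw [Set.mem_Iic] at this
      linarith
    · push_neg at hall
      set n := Nat.find hall with hn
      have hnS : ¬ Same n := Nat.find_spec hall
      have hnmin : ∀ k < n, Same k := fun k hk => not_not.mp (Nat.find_min hall hk)
      have hgn := hgap n hnmin
      have hlt : T^[n] x < T^[n] y := by linarith
      have hxAB := hdichot _ (horbx n)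
      have hyAB := hdichot _ (horby n)
      have hkey : T^[n] x ∈ setA m lA ∧ T^[n] y ∈ setB m lA lB := by
        rcases hxAB with h1 | h1 <;> rcases hyAB with h2 | h2
        · exact absurd (Or.inl ⟨h1, h2⟩) hnS
        · exact ⟨h1, h2⟩
        · exfalso
          rw [hsetB] at h1; rw [hsetA] at h2
          linarith [h1.1, h2.2]
        · exact absurd (Or.inr ⟨h1, h2⟩) hnS
      have hk0 : ∃ k0 : ℕ, n < k0 ∧ T^[k0] x ∈ setA m lA := by
        by_contra hc
        push_neg at hc
        have hz : T^[n+1] x ∈ Set.Ico (0:ℝ) 1 := horbx (n+1)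
        have hrange : (Set.range fun j : ℕ => T^[j] (T^[n+1] x)) ⊆ Set.Ici (∑ i, lA i) := by
          rintro _ ⟨j, rfl⟩
          show T^[j] (T^[n+1] x) ∈ Set.Ici (∑ i, lA i)
          rw [← Function.iterate_add_apply]
          have hj : T^[j + (n+1)] x ∈ setB m lA lB :=
            (hdichot _ (horbx _)).resolve_left (hc _ (by omega))
          rw [hsetB] at hj
          exact hj.1
        have hcl : closure (Set.range fun j : ℕ => T^[j] (T^[n+1] x))
            ⊆ Set.Ici (∑ i, lA i) :=
          closure_minimal hrange isClosed_Ici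
        have hpm : ((∑ i, lA i)/2) ∈ Set.Ico (0:ℝ) 1 :=
          ⟨by linarith, by linarith⟩
        have := hcl (hmin _ hz hpm)
        rw [Set.mem_Ici] at this
        linarith
      obtain ⟨k0, hk0n, hk0A⟩ := hk0
      set d : ℕ → ℝ :=
        fun k => (setB m lA lB).indicator (fun _ => (1:ℝ)) (T^[k] x) with hd
      set d' : ℕ → ℝ :=
        fun k => (setB m lA lB).indicator (fun _ => (1:ℝ)) (T^[k] y) with hd'
      have hind0 : ∀ z : ℝ, 0 ≤ (setB m lA lB).indicator (fun _ => (1:ℝ)) z := by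
        intro z
        by_cases h : z ∈ setB m lA lB <;> simp [Set.indicator_apply, h]
      have hind1 : ∀ z : ℝ, (setB m lA lB).indicator (fun _ => (1:ℝ)) z ≤ 1 := by
        intro z
        by_cases h : z ∈ setB m lA lB <;> simp [Set.indicator_apply, h]
      have heq : ∀ k < n, d k = d' k := by
        intro k hk
        rcases hnmin k hk with ⟨h1, h2⟩ | ⟨h1, h2⟩
        · simp only [hd, hd']
          rw [Set.indicator_of_notMem (fun h => hdisj _ h1 h),
            Set.indicator_of_notMem (fun h => hdisj _ h2 h)]
        · simp only [hd, hd']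
          rw [Set.indicator_of_mem h1, Set.indicator_of_mem h2]
      have hdn : d n = 0 := by
        simp only [hd]
        exact Set.indicator_of_notMem (fun h => hdisj _ hkey.1 h) _
      have hd'n : d' n = 1 := by
        simp only [hd']
        exact Set.indicator_of_mem hkey.2 _
      have hdk0 : d k0 = 0 := by
        simp only [hd]
        exact Set.indicator_of_notMem (fun h => hdisj _ hk0A h) _
      have hmain := tsum_digit_lt hk0n (fun k => hind0 _) (fun k => hind1 _)
        (fun k => hind0 _) (fun k => hind1 _) heq hdn hd'n hdk0
      exact hmain
  exact ⟨hmono, hmono.injOn⟩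
end
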